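/- arXiv:1805.04275 — 3 statements merged into one kernel-verified Lean document; each statement's English description precedes it below -/
import Mathlib

section
/- Let r > 2 be a real number. Then there exists a constant d_r > 0 depending only on r such that for all U = (u₁, u₂) and V = (v₁, v₂) in ℝ² and all i, j ∈ {1, 2}, one has | (|U|^{r-2} u_i - |V|^{r-2} v_i)(u_j - v_j) | ≤ d_r (|U|^{r-2} + |V|^{r-2}) |U - V|². Moreover one may take d_r = (r-1)/2 when r ≥ 4, d_r = 3/2 when 3 < r < 4, and d_r = 1 when 2 < r ≤ 3. -/
/-!
With `p = r - 2`, write `‖U‖ ^ p • U - ‖V‖ ^ p • V = ‖U‖ ^ p • (U - V) + (‖U‖ ^ p - ‖V‖ ^ p) • V`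
and assume `b = ‖V‖ ≤ a = ‖U‖`. The first term has norm at most `a ^ p * ‖U - V‖`, and the
second at most `(a ^ p - b ^ p) * b = a ^ (p + 1) - b ^ (p + 1) - a ^ p * (a - b)`; since
`a - b ≤ ‖U - V‖`, everything reduces to the scalar inequality
`a ^ (p + 1) - b ^ (p + 1) ≤ d * (a ^ p + b ^ p) * (a - b)` for `0 ≤ b ≤ a`.
For `p ≤ 1` and `d = 1` it is equivalent to `a ^ p * b ≤ a * b ^ p`. For `p ≥ 1` and
`d = (p + 1) / 2` it is the trapezoid rule for the convex function `(p + 1) * x ^ p` integrated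
over `[b, a]`, proved by differentiating in `b`. A coordinate of a vector is bounded by its norm.
-/

open Real Set

lemma mul_rpow_sub_one_mul_sub_le_rpow_sub_rpow {p x a : ℝ} (hp : 1 ≤ p) (hx : 0 ≤ x)
    (hxa : x ≤ a) :
    p * x ^ (p - 1) * (a - x) ≤ a ^ p - x ^ p := by
  rcases hxa.eq_or_lt with rfl | hxa
  · simp
  have hslope := (convexOn_rpow hp).le_slope_of_hasDerivAt (mem_Ici.2 hx)
    (mem_Ici.2 (hx.trans hxa.le)) hxa (hasDerivAt_rpow_const (Or.inr hp))
  rwa [slope_def_field, le_div_iff₀ (sub_pos.2 hxa)] at hslope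

lemma rpow_add_one_sub_rpow_add_one_le_of_one_le {p a b : ℝ} (hp : 1 ≤ p) (hb : 0 ≤ b)
    (hba : b ≤ a) :
    a ^ (p + 1) - b ^ (p + 1) ≤ (p + 1) / 2 * (a ^ p + b ^ p) * (a - b) := by
  set F : ℝ → ℝ := fun x ↦ (p + 1) / 2 * (a ^ p + x ^ p) * (a - x) + x ^ (p + 1)
  set F' : ℝ → ℝ := fun x ↦
    (p + 1) / 2 * (p * x ^ (p - 1) * (a - x) - (a ^ p + x ^ p)) + (p + 1) * x ^ p
  have hderiv : ∀ x ∈ Ioo b a, HasDerivAt F (F' x) x := by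
    intro x hx
    have hx0 : x ≠ 0 := (hb.trans_lt hx.1).ne'
    have h := ((((hasDerivAt_rpow_const (p := p) (Or.inl hx0)).const_add (a ^ p)).const_mul
      ((p + 1) / 2)).mul ((hasDerivAt_id x).const_sub a)).add
      (hasDerivAt_rpow_const (p := p + 1) (Or.inl hx0))
    refine (show HasDerivAt F _ x from h).congr_deriv ?_
    simp only [id, add_sub_cancel_right]; ring
  have hcont : Continuous F := by
    have := continuous_rpow_const (q := p) (by linarith)
    have := continuous_rpow_const (q := p + 1) (by linarith)
    fun_prop
  have hanti : AntitoneOn F (Icc b a) := by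
    refine antitoneOn_of_hasDerivWithinAt_nonpos (convex_Icc b a) hcont.continuousOn
      (f' := F') (fun x hx ↦ ?_) (fun x hx ↦ ?_) <;> rw [interior_Icc] at hx
    · exact (hderiv x hx).hasDerivWithinAt
    · -- `F' x = (p + 1) / 2 * (x ^ p + p * x ^ (p - 1) * (a - x) - a ^ p)`: convexity of `x ^ p`
      have htan := mul_rpow_sub_one_mul_sub_le_rpow_sub_rpow hp (hb.trans hx.1.le) hx.2.le
      simp only [F']
      nlinarith
  have := hanti (left_mem_Icc.2 hba) (right_mem_Icc.2 hba) hba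
  simp only [F, sub_self, mul_zero, zero_add] at this
  linarith

lemma rpow_add_one_sub_rpow_add_one_le_of_le_one {p a b : ℝ} (hp₀ : 0 ≤ p) (hp₁ : p ≤ 1)
    (hb : 0 ≤ b) (hba : b ≤ a) :
    a ^ (p + 1) - b ^ (p + 1) ≤ (a ^ p + b ^ p) * (a - b) := by
  have ha : 0 ≤ a := hb.trans hba
  have hmix : a ^ p * b ≤ a * b ^ p := by
    rcases hb.eq_or_lt with rfl | hb
    · simpa using mul_nonneg ha (zero_rpow_nonneg p)
    have h := rpow_le_self_of_one_le ((one_le_div hb).2 hba) hp₁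
    rwa [div_rpow ha hb.le, div_le_div_iff₀ (rpow_pos_of_pos hb p) hb] at h
  rw [rpow_add_one' ha (by linarith), rpow_add_one' hb (by linarith)]
  linarith

lemma norm_rpow_smul_sub_rpow_smul_le_of_norm_le {E : Type*} [SeminormedAddCommGroup E]
    [NormedSpace ℝ E] {p d : ℝ} (hp : 0 ≤ p) (hd : 1 ≤ d) {U V : E} (hVU : ‖V‖ ≤ ‖U‖)
    (h : ‖U‖ ^ (p + 1) - ‖V‖ ^ (p + 1) ≤ d * (‖U‖ ^ p + ‖V‖ ^ p) * (‖U‖ - ‖V‖)) :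
    ‖‖U‖ ^ p • U - ‖V‖ ^ p • V‖ ≤ d * (‖U‖ ^ p + ‖V‖ ^ p) * ‖U - V‖ := by
  rw [rpow_add_one' (norm_nonneg U) (by linarith),
    rpow_add_one' (norm_nonneg V) (by linarith)] at h
  set a := ‖U‖
  set b := ‖V‖
  have hap : 0 ≤ a ^ p := rpow_nonneg (norm_nonneg U) p
  have hbp : 0 ≤ b ^ p := rpow_nonneg (norm_nonneg V) p
  have hpow : b ^ p ≤ a ^ p := rpow_le_rpow (norm_nonneg V) hVU hp
  have hab : a - b ≤ ‖U - V‖ := norm_sub_norm_le U V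
  calc ‖a ^ p • U - b ^ p • V‖ = ‖a ^ p • (U - V) + (a ^ p - b ^ p) • V‖ := by
        congr 1; simp only [smul_sub, sub_smul]; abel
    _ ≤ a ^ p * ‖U - V‖ + (a ^ p - b ^ p) * b := by
        refine (norm_add_le _ _).trans ?_
        rw [norm_smul, norm_smul, Real.norm_of_nonneg hap, Real.norm_of_nonneg (by linarith)]
    _ ≤ a ^ p * ‖U - V‖ + (d * (a ^ p + b ^ p) - a ^ p) * (a - b) := by linarith
    _ ≤ a ^ p * ‖U - V‖ + (d * (a ^ p + b ^ p) - a ^ p) * ‖U - V‖ := by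
        gcongr
        nlinarith
    _ = d * (a ^ p + b ^ p) * ‖U - V‖ := by ring

lemma norm_rpow_smul_sub_rpow_smul_le {E : Type*} [SeminormedAddCommGroup E]
    [NormedSpace ℝ E] {p d : ℝ} (hp : 0 ≤ p) (hd : 1 ≤ d)
    (h : ∀ a b : ℝ, 0 ≤ b → b ≤ a → a ^ (p + 1) - b ^ (p + 1) ≤ d * (a ^ p + b ^ p) * (a - b))
    (U V : E) :
    ‖‖U‖ ^ p • U - ‖V‖ ^ p • V‖ ≤ d * (‖U‖ ^ p + ‖V‖ ^ p) * ‖U - V‖ := by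
  wlog hVU : ‖V‖ ≤ ‖U‖ generalizing U V
  · rw [norm_sub_rev, add_comm, norm_sub_rev U]
    exact this V U (le_of_not_ge hVU)
  exact norm_rpow_smul_sub_rpow_smul_le_of_norm_le hp hd hVU (h _ _ (norm_nonneg V) hVU)

/-- Local Lipschitz-type estimate for `U ↦ |U|^{r-2}U` on `ℝ²`, with the explicit
constant `d_r = (r-1)/2` for `r ≥ 4`, `d_r = 3/2` for `3 < r < 4`, and `d_r = 1`
for `2 < r ≤ 3`. -/
theorem locLip (r : ℝ) (hr : 2 < r) :
    ∃ d : ℝ, 0 < d ∧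
      d = (if 4 ≤ r then (r - 1) / 2 else if 3 < r then 3 / 2 else 1) ∧
      ∀ (U V : EuclideanSpace ℝ (Fin 2)) (i j : Fin 2),
        |(‖U‖ ^ (r - 2) * U i - ‖V‖ ^ (r - 2) * V i) * (U j - V j)| ≤
          d * (‖U‖ ^ (r - 2) + ‖V‖ ^ (r - 2)) * ‖U - V‖ ^ 2 := by
  set d : ℝ := if 4 ≤ r then (r - 1) / 2 else if 3 < r then 3 / 2 else 1
  have hd : 1 ≤ d := by unfold d; split_ifs <;> linarith
  have hp : 0 ≤ r - 2 := by linarith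
  have hscalar : ∀ a b : ℝ, 0 ≤ b → b ≤ a →
      a ^ (r - 2 + 1) - b ^ (r - 2 + 1) ≤ d * (a ^ (r - 2) + b ^ (r - 2)) * (a - b) := by
    intro a b hb hba
    unfold d
    split_ifs
    · convert rpow_add_one_sub_rpow_add_one_le_of_one_le (p := r - 2) (by linarith) hb hba
        using 2
      ring
    · have hmono : 0 ≤ (a ^ (r - 2) + b ^ (r - 2)) * (a - b) :=
        mul_nonneg (add_nonneg (rpow_nonneg (hb.trans hba) _) (rpow_nonneg hb _)) (by linarith)
      have := rpow_add_one_sub_rpow_add_one_le_of_one_le (p := r - 2) (by linarith) hb hba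
      nlinarith
    · simpa using rpow_add_one_sub_rpow_add_one_le_of_le_one hp (by linarith) hb hba
  refine ⟨d, by linarith, rfl, fun U V i j ↦ ?_⟩
  have hnorm := norm_rpow_smul_sub_rpow_smul_le hp hd hscalar U V
  have hi := PiLp.norm_apply_le (‖U‖ ^ (r - 2) • U - ‖V‖ ^ (r - 2) • V) i
  have hj := PiLp.norm_apply_le (U - V) j
  simp only [PiLp.sub_apply, PiLp.smul_apply, smul_eq_mul, Real.norm_eq_abs] at hi hj
  rw [abs_mul, sq, ← mul_assoc]
  exact mul_le_mul (hi.trans hnorm) hj (abs_nonneg _) (by positivity)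
end

section
/- Let δ > 0, K > 0, S > 0, let f ∈ L¹(0, S), and let j : [0, S] → ℝ be an absolutely continuous nonnegative function satisfying j'(t) + δ j(t) ≤ K |f(t)| for almost every t ∈ [0, S]. Then for all t ∈ [0, S], j(t) ≤ j(0) e^{-δ t} + (K / (1 - e^{-δ})) · ⧵f⧵₁, where ⧵f⧵₁ := sup over s ≥ 0 of ∫_s^{s+1} |f̃(τ)| dτ and f̃ is the extension of f by zero to [0, ∞). -/
open MeasureTheory Set Real

lemma geom_bound {r : ℝ} (h0 : 0 ≤ r) (h1 : r < 1) (N : ℕ) :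
    ∑ k ∈ Finset.range N, r ^ k ≤ (1 - r)⁻¹ := by
  have h2 : (0:ℝ) < 1 - r := by linarith
  rw [geom_sum_eq (ne_of_lt h1) N]
  have h3 : (r ^ N - 1)/(r - 1) = (1 - r ^ N)/(1 - r) := by
    rw [← neg_div_neg_eq]; ring_nf
  rw [h3]
  have h4 : 1 - r ^ N ≤ 1 := by nlinarith [pow_nonneg h0 N]
  calc (1 - r ^ N)/(1 - r) ≤ 1/(1 - r) := by gcongr
    _ = (1 - r)⁻¹ := one_div _


lemma expwt_int {g : ℝ → ℝ} (hg : Integrable g) (δ c a b : ℝ) :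
    IntegrableOn (fun s => Real.exp (δ * (s - c)) * g s) (Set.uIoc a b) := by
  have hb : ∀ᵐ s ∂(volume.restrict (Set.uIoc a b)),
      ‖Real.exp (δ * (s - c)) * g s‖ ≤ Real.exp (|δ| * (|a| + |b| + |c|)) * ‖g s‖ := by
    rw [ae_restrict_iff' measurableSet_uIoc]
    refine .of_forall fun s hs => ?_
    rw [norm_mul]
    gcongr
    rw [Real.norm_eq_abs, Real.abs_exp]
    apply Real.exp_le_exp.2
    have h3 : -|a| - |b| ≤ min a b := by
      rcases min_cases a b with ⟨h,_⟩|⟨h,_⟩ <;>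
        nlinarith [neg_abs_le a, neg_abs_le b, abs_nonneg a, abs_nonneg b]
    have h4 : max a b ≤ |a| + |b| := by
      rcases max_cases a b with ⟨h,_⟩|⟨h,_⟩ <;>
        nlinarith [le_abs_self a, le_abs_self b, abs_nonneg a, abs_nonneg b]
    have h1 : |s| ≤ |a| + |b| := abs_le.2 ⟨by linarith [hs.1.le], by linarith [hs.2]⟩
    calc δ * (s - c) ≤ |δ * (s - c)| := le_abs_self _
      _ = |δ| * |s - c| := abs_mul _ _
      _ ≤ |δ| * (|a| + |b| + |c|) := by
          gcongr
          calc |s - c| ≤ |s| + |c| := abs_sub _ _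
            _ ≤ |a| + |b| + |c| := by linarith
  refine Integrable.mono' ((hg.norm.const_mul _).restrict) ?_ hb
  exact ((Real.continuous_exp.comp (by continuity)).aestronglyMeasurable.mul
    hg.aestronglyMeasurable).restrict

lemma expwt_ii {g : ℝ → ℝ} (hg : Integrable g) (δ c a b : ℝ) :
    IntervalIntegrable (fun s => Real.exp (δ * (s - c)) * g s) volume a b :=
  intervalIntegrable_iff.2 (expwt_int hg δ c a b)

lemma stepC {δ : ℝ} (hδ : 0 < δ) {g : ℝ → ℝ} (hg : Integrable g) (hgnn : ∀ x, 0 ≤ g x)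
    {M : ℝ} (hM : ∀ a, 0 ≤ a → (∫ τ in a..(a+1), g τ) ≤ M) :
    ∀ N : ℕ, ∀ t : ℝ, 0 ≤ t → t ≤ N →
      (∫ s in (0:ℝ)..t, Real.exp (δ * (s - t)) * g s) ≤
        M * ∑ k ∈ Finset.range N, Real.exp (-δ) ^ k := by
  have hM0 : 0 ≤ M := le_trans (intervalIntegral.integral_nonneg (by norm_num)
    (fun x _ => hgnn x)) (hM 0 le_rfl)
  have hgii : ∀ a b : ℝ, IntervalIntegrable g volume a b := fun a b => hg.intervalIntegrable
  intro N
  induction N with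
  | zero =>
    intro t ht0 ht1
    have : t = 0 := le_antisymm (by exact_mod_cast ht1) ht0
    simp [this]
  | succ N ih =>
    intro t ht0 htN
    by_cases htN' : t ≤ N
    · refine (ih t ht0 htN').trans ?_
      apply mul_le_mul_of_nonneg_left ?_ hM0
      apply Finset.sum_le_sum_of_subset_of_nonneg
        (Finset.range_subset_range.2 (Nat.le_succ N))
      intro k _ _; positivity
    · by_cases ht1 : 1 ≤ t
      · have hsplit : (∫ s in (0:ℝ)..t, Real.exp (δ * (s - t)) * g s) =
            (∫ s in (0:ℝ)..(t-1), Real.exp (δ * (s - t)) * g s) +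
            ∫ s in (t-1)..t, Real.exp (δ * (s - t)) * g s :=
          (intervalIntegral.integral_add_adjacent_intervals
            (expwt_ii hg δ t 0 (t-1)) (expwt_ii hg δ t (t-1) t)).symm
        have key1 : (∫ s in (t-1)..t, Real.exp (δ * (s - t)) * g s) ≤ M := by
          refine le_trans (intervalIntegral.integral_mono_on (by linarith)
            (expwt_ii hg δ t (t-1) t) (hgii _ _) (fun x hx => ?_)) ?_
          · have : Real.exp (δ * (x - t)) ≤ 1 := by
              rw [Real.exp_le_one_iff]; nlinarith [hx.2]
            calc Real.exp (δ * (x - t)) * g x ≤ 1 * g x := by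
                  exact mul_le_mul_of_nonneg_right this (hgnn x)
              _ = g x := one_mul _
          · have := hM (t-1) (by linarith)
            rwa [sub_add_cancel] at this
        have key2 : (∫ s in (0:ℝ)..(t-1), Real.exp (δ * (s - t)) * g s) =
            Real.exp (-δ) * ∫ s in (0:ℝ)..(t-1), Real.exp (δ * (s - (t-1))) * g s := by
          rw [← intervalIntegral.integral_const_mul]
          apply intervalIntegral.integral_congr
          intro s _
          simp only [← mul_assoc, ← Real.exp_add]
          ring_nf
        have ihle := ih (t-1) (by linarith) (by push_cast at htN ⊢; linarith)
        have hexp : (0:ℝ) < Real.exp (-δ) := Real.exp_pos _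
        rw [hsplit, key2, geom_sum_succ]
        have : Real.exp (-δ) * (∫ s in (0:ℝ)..(t-1), Real.exp (δ * (s - (t-1))) * g s)
            ≤ Real.exp (-δ) * (M * ∑ k ∈ Finset.range N, Real.exp (-δ) ^ k) :=
          mul_le_mul_of_nonneg_left ihle hexp.le
        nlinarith [this, key1]
      · push_neg at ht1
        have key1 : (∫ s in (0:ℝ)..t, Real.exp (δ * (s - t)) * g s) ≤ M := by
          have h1 : (∫ s in (0:ℝ)..t, Real.exp (δ * (s - t)) * g s) ≤
              ∫ s in (0:ℝ)..t, g s := by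
            refine intervalIntegral.integral_mono_on ht0
              (expwt_ii hg δ t 0 t) (hgii _ _) (fun x hx => ?_)
            have : Real.exp (δ * (x - t)) ≤ 1 := by
              rw [Real.exp_le_one_iff]; nlinarith [hx.2]
            calc Real.exp (δ * (x - t)) * g x ≤ 1 * g x :=
                  mul_le_mul_of_nonneg_right this (hgnn x)
              _ = g x := one_mul _
          have h2 : (∫ s in (0:ℝ)..t, g s) ≤ ∫ s in (0:ℝ)..(1:ℝ), g s := by
            rw [← intervalIntegral.integral_add_adjacent_intervals (hgii 0 t) (hgii t 1)]
            have : 0 ≤ ∫ s in t..(1:ℝ), g s :=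
              intervalIntegral.integral_nonneg ht1.le (fun x _ => hgnn x)
            linarith
          have h3 := hM 0 le_rfl
          rw [zero_add] at h3
          linarith
        have hsum : (1:ℝ) ≤ ∑ k ∈ Finset.range (N+1), Real.exp (-δ) ^ k := by
          have := Finset.single_le_sum (f := fun k => Real.exp (-δ) ^ k)
            (fun k _ => by positivity) (Finset.mem_range.2 (Nat.succ_pos N))
          simpa using this
        nlinarith


lemma exp_deriv_int {δ : ℝ} (a b : ℝ) (hab : a ≤ b) :
    (∫ s in Icc a b, δ * Real.exp (δ * s)) = Real.exp (δ * b) - Real.exp (δ * a) := by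
  rw [integral_Icc_eq_integral_Ioc, ← intervalIntegral.integral_of_le hab]
  have hd : ∀ s ∈ Set.uIcc a b, HasDerivAt (fun u => Real.exp (δ * u)) (δ * Real.exp (δ * s)) s :=
    fun s _ => by simpa [mul_comm] using ((hasDerivAt_id s).const_mul δ).exp
  exact intervalIntegral.integral_eq_sub_of_hasDerivAt hd
    (((by continuity : Continuous fun x : ℝ => δ * Real.exp (δ * x))).intervalIntegrable _ _)

lemma parts {δ t : ℝ} (hδ : 0 < δ) (ht : 0 ≤ t) {w : ℝ → ℝ} (hw : Integrable w)
    (hwm : StronglyMeasurable w) :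
    (∫ s in (0:ℝ)..t, δ * Real.exp (δ * s) * ∫ τ in (0:ℝ)..s, w τ)
      = Real.exp (δ * t) * (∫ τ in (0:ℝ)..t, w τ) - ∫ τ in (0:ℝ)..t, Real.exp (δ * τ) * w τ := by
  set μ := volume.restrict (Ioc (0:ℝ) t) with hμ
  haveI : IsFiniteMeasure μ := ⟨by
    rw [hμ, Measure.restrict_apply_univ]; exact measure_Ioc_lt_top⟩
  set G : ℝ × ℝ → ℝ := fun p => δ * Real.exp (δ * p.1) * w p.2 with hG
  set F : ℝ × ℝ → ℝ := {p : ℝ × ℝ | p.2 ≤ p.1}.indicator G with hF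
  have hGm : StronglyMeasurable G :=
    ((continuous_const.mul (Real.continuous_exp.comp
      (continuous_const.mul continuous_fst))).stronglyMeasurable).mul
      (hwm.comp_measurable measurable_snd)
  have hFm : StronglyMeasurable F :=
    hGm.indicator (isClosed_le continuous_snd continuous_fst).measurableSet
  have hFint : Integrable F (μ.prod μ) := by
    have hdom : Integrable (fun p : ℝ × ℝ => (δ * Real.exp (δ * t)) * |w p.2|) (μ.prod μ) :=
      Integrable.mul_prod (integrable_const _) hw.abs.restrict
    refine hdom.mono' (hFm.aestronglyMeasurable) ?_
    rw [hμ, Measure.prod_restrict, ae_restrict_iff' (measurableSet_Ioc.prod measurableSet_Ioc)]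
    refine .of_forall fun p hp => ?_
    have hp1 : p.1 ∈ Ioc (0:ℝ) t := hp.1
    calc ‖F p‖ ≤ ‖G p‖ := norm_indicator_le_norm_self G p
      _ ≤ δ * Real.exp (δ * t) * |w p.2| := by
          rw [hG, Real.norm_eq_abs, abs_mul, abs_mul, abs_of_pos hδ, Real.abs_exp]
          exact mul_le_mul_of_nonneg_right (mul_le_mul_of_nonneg_left
            (Real.exp_le_exp.2 (by nlinarith [hp1.2])) hδ.le) (abs_nonneg _)
  have hswap : (∫ s, (∫ τ, F (s, τ) ∂μ) ∂μ) = ∫ τ, (∫ s, F (s, τ) ∂μ) ∂μ :=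
    integral_integral_swap (by exact hFint)
  -- LHS identification
  have hLHS : (∫ s in (0:ℝ)..t, δ * Real.exp (δ * s) * ∫ τ in (0:ℝ)..s, w τ)
      = ∫ s, (∫ τ, F (s, τ) ∂μ) ∂μ := by
    rw [intervalIntegral.integral_of_le ht, hμ]
    refine setIntegral_congr_fun measurableSet_Ioc (fun s hs => ?_)
    have h1 : (fun τ => F (s, τ)) = (Iic s).indicator (fun τ => δ * Real.exp (δ * s) * w τ) := by
      funext τ
      simp only [hF, hG, Set.indicator_apply, Set.mem_setOf_eq, Set.mem_Iic]
    rw [h1, MeasureTheory.integral_indicator measurableSet_Iic, Measure.restrict_restrict measurableSet_Iic]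
    have h2 : Iic s ∩ Ioc 0 t = Ioc 0 s := by
      rw [Set.inter_comm, Ioc_inter_Iic, min_eq_right hs.2]
    rw [h2, MeasureTheory.integral_const_mul, intervalIntegral.integral_of_le hs.1.le]
  -- RHS identification
  have hRHS : (∫ τ, (∫ s, F (s, τ) ∂μ) ∂μ)
      = Real.exp (δ * t) * (∫ τ in Ioc (0:ℝ) t, w τ) - ∫ τ in Ioc (0:ℝ) t, Real.exp (δ * τ) * w τ := by
    rw [hμ]
    have step1 : ∀ τ ∈ Ioc (0:ℝ) t,
        (∫ s, F (s, τ) ∂μ) = (Real.exp (δ * t) - Real.exp (δ * τ)) * w τ := by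
      intro τ hτ
      have h1 : (fun s => F (s, τ)) = (Ici τ).indicator (fun s => δ * Real.exp (δ * s) * w τ) := by
        funext s
        simp only [hF, hG, Set.indicator_apply, Set.mem_setOf_eq, Set.mem_Ici]
      rw [h1, hμ, MeasureTheory.integral_indicator measurableSet_Ici,
        Measure.restrict_restrict measurableSet_Ici]
      have h2 : Ici τ ∩ Ioc 0 t = Icc τ t := by
        ext x
        simp only [Set.mem_inter_iff, Set.mem_Ici, Set.mem_Ioc, Set.mem_Icc]
        constructor
        · rintro ⟨h3, h4, h5⟩; exact ⟨h3, h5⟩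
        · rintro ⟨h3, h4⟩; exact ⟨h3, lt_of_lt_of_le hτ.1 h3, h4⟩
      rw [h2, MeasureTheory.integral_mul_const, exp_deriv_int τ t hτ.2]
    rw [setIntegral_congr_fun measurableSet_Ioc step1]
    have hint1 : IntegrableOn (fun τ => Real.exp (δ * τ) * w τ) (Ioc 0 t) := by
      have hcm : Continuous fun τ : ℝ => Real.exp (δ * τ) := by continuity
      refine Integrable.mono' ((hw.norm.const_mul (Real.exp (δ * t))).restrict)
        (hcm.stronglyMeasurable.aestronglyMeasurable.mul hw.1.restrict) ?_
      rw [ae_restrict_iff' measurableSet_Ioc]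
      refine .of_forall fun s hs => ?_
      rw [norm_mul, Real.norm_eq_abs (Real.exp _), Real.abs_exp]
      gcongr
      exact hs.2
    have heq : ∀ τ, (Real.exp (δ * t) - Real.exp (δ * τ)) * w τ
        = Real.exp (δ * t) * w τ - Real.exp (δ * τ) * w τ := fun τ => by ring
    simp_rw [heq]
    rw [integral_sub ((hw.restrict).const_mul _) hint1, MeasureTheory.integral_const_mul]
  rw [hLHS, hswap, hRHS, intervalIntegral.integral_of_le ht, intervalIntegral.integral_of_le ht]


/-- Uniform Gronwall lemma: if `j' + δ j ≤ K|f|` a.e. on `[0,S]`, then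
`j(t) ≤ j(0)e^{-δt} + (K/(1-e^{-δ})) ⧵f⧵₁`, where `⧵f⧵₁` is the supremum of the
integrals of `|f̃|` over unit intervals (`f̃` the zero extension of `f`). -/
theorem uniform_gronwall (δ K S : ℝ) (hδ : 0 < δ) (hK : 0 < K) (hS : 0 < S)
    (f j j' : ℝ → ℝ)
    (hf : IntegrableOn f (Icc 0 S))
    (hjnn : ∀ t ∈ Icc 0 S, 0 ≤ j t)
    (hj'int : IntegrableOn j' (Icc 0 S))
    (hFTC : ∀ t ∈ Icc 0 S, j t = j 0 + ∫ s in (0:ℝ)..t, j' s)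
    (hae : ∀ᵐ t ∂(volume.restrict (Icc 0 S)), j' t + δ * j t ≤ K * |f t|) :
    ∀ t ∈ Icc 0 S,
      j t ≤ j 0 * Real.exp (-δ * t) +
        (K / (1 - Real.exp (-δ))) *
          sSup {y : ℝ | ∃ s ≥ (0:ℝ),
            y = ∫ τ in s..(s + 1), |Set.indicator (Icc 0 S) f τ|} := by
  -- measurable representative of j'
  set w : ℝ → ℝ := (Icc 0 S).indicator (hj'int.1.mk j') with hwdef
  have hwm : StronglyMeasurable w :=
    (hj'int.1.stronglyMeasurable_mk).indicator measurableSet_Icc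
  have hww : w =ᵐ[volume.restrict (Icc 0 S)] j' :=
    (indicator_ae_eq_restrict measurableSet_Icc).trans hj'int.1.ae_eq_mk.symm
  have hwint : Integrable w := by
    rw [hwdef, integrable_indicator_iff measurableSet_Icc]
    exact hj'int.congr hj'int.1.ae_eq_mk
  have hint_eq : ∀ x ∈ Icc (0:ℝ) S, (∫ s in (0:ℝ)..x, j' s) = ∫ s in (0:ℝ)..x, w s := by
    intro x hx
    rw [intervalIntegral.integral_of_le hx.1, intervalIntegral.integral_of_le hx.1]
    have hsub' : Ioc (0:ℝ) x ⊆ Icc 0 S := fun y hy => ⟨hy.1.le, hy.2.trans hx.2⟩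
    exact integral_congr_ae (ae_restrict_of_ae_restrict_of_subset hsub' hww.symm)
  set h : ℝ → ℝ := fun x => j 0 + ∫ s in (0:ℝ)..x, w s with hhdef
  have hjh : ∀ x ∈ Icc (0:ℝ) S, j x = h x := fun x hx => by
    rw [hFTC x hx, hint_eq x hx]
  intro t ht
  obtain ⟨ht0, htS⟩ := ht
  -- the zero extension of f and the sup of unit-interval integrals
  set ft : ℝ → ℝ := (Icc 0 S).indicator f with hftdef
  have hftint : Integrable ft := (integrable_indicator_iff measurableSet_Icc).2 hf
  have hg : Integrable (fun τ => |ft τ|) := hftint.abs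
  set M : ℝ := sSup {y : ℝ | ∃ s ≥ (0:ℝ), y = ∫ τ in s..(s + 1), |ft τ|} with hMdef
  have hbdd : BddAbove {y : ℝ | ∃ s ≥ (0:ℝ), y = ∫ τ in s..(s + 1), |ft τ|} := by
    refine ⟨∫ τ, |ft τ|, ?_⟩
    rintro y ⟨a, ha, rfl⟩
    rw [intervalIntegral.integral_of_le (by linarith : a ≤ a + 1)]
    exact setIntegral_le_integral hg (.of_forall fun x => abs_nonneg _)
  have hMle : ∀ a, 0 ≤ a → (∫ τ in a..(a + 1), |ft τ|) ≤ M :=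
    fun a ha => le_csSup hbdd ⟨a, ha, rfl⟩
  have hM0 : 0 ≤ M :=
    le_trans (intervalIntegral.integral_nonneg (by norm_num) (fun x _ => abs_nonneg _))
      (hMle 0 le_rfl)
  -- interval integrability of various functions on [0, t]
  have hI1 : IntervalIntegrable (fun s => Real.exp (δ * s) * w s) volume 0 t := by
    have := expwt_ii hwint δ 0 0 t
    simpa using this
  have hcexp : Continuous fun s : ℝ => δ * Real.exp (δ * s) :=
    continuous_const.mul (Real.continuous_exp.comp (continuous_const.mul continuous_id))
  have hI2 : IntervalIntegrable (fun s => δ * Real.exp (δ * s) * j 0) volume 0 t :=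
    (hcexp.mul continuous_const).intervalIntegrable 0 t
  have hI3 : IntervalIntegrable (fun s => δ * Real.exp (δ * s) * ∫ τ in (0:ℝ)..s, w τ)
      volume 0 t := by
    apply ContinuousOn.intervalIntegrable
    exact (hcexp.continuousOn).mul
      (intervalIntegral.continuousOn_primitive_interval hwint.integrableOn)
  have hIrhs : IntervalIntegrable (fun s => K * (Real.exp (δ * s) * |ft s|)) volume 0 t := by
    have := (expwt_ii hg δ 0 0 t).const_mul K
    simpa using this
  have hIh : IntervalIntegrable (fun s => Real.exp (δ * s) * w s + δ * Real.exp (δ * s) * h s)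
      volume 0 t := by
    have : (fun s => Real.exp (δ * s) * w s + δ * Real.exp (δ * s) * h s)
        = fun s => (Real.exp (δ * s) * w s) + ((δ * Real.exp (δ * s) * j 0)
          + (δ * Real.exp (δ * s) * ∫ τ in (0:ℝ)..s, w τ)) := by
      funext s; rw [hhdef]; ring
    rw [this]
    exact hI1.add (hI2.add hI3)
  -- the key identity
  have hexp_int : (∫ s in (0:ℝ)..t, δ * Real.exp (δ * s)) = Real.exp (δ * t) - 1 := by
    rw [intervalIntegral.integral_of_le ht0, ← integral_Icc_eq_integral_Ioc,
      exp_deriv_int 0 t ht0]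
    simp
  have hid : (∫ s in (0:ℝ)..t, (Real.exp (δ * s) * w s + δ * Real.exp (δ * s) * h s))
      = Real.exp (δ * t) * h t - j 0 := by
    have hsplit : (∫ s in (0:ℝ)..t, (Real.exp (δ * s) * w s + δ * Real.exp (δ * s) * h s))
        = (∫ s in (0:ℝ)..t, Real.exp (δ * s) * w s)
          + ((∫ s in (0:ℝ)..t, δ * Real.exp (δ * s) * j 0)
          + (∫ s in (0:ℝ)..t, δ * Real.exp (δ * s) * ∫ τ in (0:ℝ)..s, w τ)) := by
      rw [← intervalIntegral.integral_add hI2 hI3, ← intervalIntegral.integral_add hI1 (hI2.add hI3)]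
      apply intervalIntegral.integral_congr
      intro s _
      rw [hhdef]; ring
    have hp := parts hδ ht0 hwint hwm
    have hc : (∫ s in (0:ℝ)..t, δ * Real.exp (δ * s) * j 0)
        = (Real.exp (δ * t) - 1) * j 0 := by
      rw [← hexp_int, ← intervalIntegral.integral_mul_const]
    rw [hsplit, hp, hc, hhdef]
    ring
  -- a.e. comparison on [0, t]
  have hsub : Icc (0:ℝ) t ⊆ Icc (0:ℝ) S := Icc_subset_Icc le_rfl htS
  have haet : ∀ᵐ s ∂(volume.restrict (Icc 0 t)),
      Real.exp (δ * s) * w s + δ * Real.exp (δ * s) * h s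
        ≤ K * (Real.exp (δ * s) * |ft s|) := by
    have h1 := ae_restrict_of_ae_restrict_of_subset hsub hae
    have h2 := ae_restrict_of_ae_restrict_of_subset hsub hww
    filter_upwards [h1, h2, ae_restrict_mem measurableSet_Icc] with s hs1 hs2 hs3
    have hjs : j s = h s := hjh s (hsub hs3)
    have hfts : ft s = f s := indicator_of_mem (hsub hs3) f
    have hpos : (0:ℝ) < Real.exp (δ * s) := Real.exp_pos _
    calc Real.exp (δ * s) * w s + δ * Real.exp (δ * s) * h s
        = Real.exp (δ * s) * (j' s + δ * j s) := by rw [hs2, hjs]; ring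
      _ ≤ Real.exp (δ * s) * (K * |f s|) := mul_le_mul_of_nonneg_left hs1 hpos.le
      _ = K * (Real.exp (δ * s) * |ft s|) := by rw [hfts]; ring
  have hmono := intervalIntegral.integral_mono_ae_restrict ht0 hIh hIrhs haet
  rw [hid, intervalIntegral.integral_const_mul] at hmono
  set I : ℝ := ∫ s in (0:ℝ)..t, Real.exp (δ * s) * |ft s| with hIdef
  have hkey : Real.exp (δ * t) * j t ≤ j 0 + K * I := by
    rw [hjh t ⟨ht0, htS⟩]
    linarith [hmono]
  -- convert to decaying form
  have hexpt : (0:ℝ) < Real.exp (δ * t) := Real.exp_pos _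
  have hstep : Real.exp (-(δ * t)) * I = ∫ s in (0:ℝ)..t, Real.exp (δ * (s - t)) * |ft s| := by
    rw [hIdef, ← intervalIntegral.integral_const_mul]
    apply intervalIntegral.integral_congr
    intro s _
    show Real.exp (-(δ * t)) * (Real.exp (δ * s) * |ft s|) = Real.exp (δ * (s - t)) * |ft s|
    rw [← mul_assoc, ← Real.exp_add]
    ring_nf
  have hC : (∫ s in (0:ℝ)..t, Real.exp (δ * (s - t)) * |ft s|)
      ≤ M * (1 - Real.exp (-δ))⁻¹ := by
    have h1 := stepC hδ hg (fun x => abs_nonneg _) hMle (Nat.ceil t) t ht0 (Nat.le_ceil t)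
    refine h1.trans ?_
    have hr0 : (0:ℝ) ≤ Real.exp (-δ) := (Real.exp_pos _).le
    have hr1 : Real.exp (-δ) < 1 := by
      rw [← Real.exp_zero]
      exact Real.exp_lt_exp.2 (by linarith)
    exact mul_le_mul_of_nonneg_left (geom_bound hr0 hr1 _) hM0
  have hrw1 : -δ * t = -(δ * t) := by ring
  have hrw2 : K / (1 - Real.exp (-δ)) * M = K * (M * (1 - Real.exp (-δ))⁻¹) := by
    rw [div_eq_mul_inv]; ring
  rw [hrw1, hrw2]
  calc j t ≤ Real.exp (-(δ * t)) * (j 0 + K * I) := by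
        calc j t = Real.exp (-(δ * t)) * (Real.exp (δ * t) * j t) := by
              rw [← mul_assoc, ← Real.exp_add]; simp
          _ ≤ _ := mul_le_mul_of_nonneg_left hkey (Real.exp_pos _).le
    _ = j 0 * Real.exp (-(δ * t)) + K * (Real.exp (-(δ * t)) * I) := by ring
    _ ≤ j 0 * Real.exp (-(δ * t)) + K * (M * (1 - Real.exp (-δ))⁻¹) := by
        have h4 : Real.exp (-(δ * t)) * I ≤ M * (1 - Real.exp (-δ))⁻¹ := by
          rw [hstep]; exact hC
        nlinarith
end

section
/- Let a, δ, K, M > 0 with δ ≤ 1 and define constants N₁ = √(2/λ₁) + 1/(1 - e^{-δλ₁/2}) for given λ₁ > 0. Suppose y : [0, t₁] → [0, ∞) is absolutely continuous with y(0) ≤ √(2/λ₁)·r, and y'(t) + (δλ₁/2) y(t) ≤ g(t) a.e. with ⧵g⧵₁ ≤ r (the sup over unit intervals of the integral of the zero extension of g). Then sup over [0, t₁] of y(t) ≤ N₁ r. -/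
/-!
With `α = δλ₁/2`, multiply the differential inequality by the integrating factor `e^{αs}` and
integrate (legitimate since `y` is absolutely continuous):
`y t ≤ e^{-αt} y 0 + ∫₀ᵗ e^{-α(t-s)} g s ds`. Cutting `[0, t]` into unit intervals from the
right, the `k`-th one contributes at most `e^{-αk} r`, so the integral is at most
`r / (1 - e^{-α})`.
-/

open MeasureTheory Set Real intervalIntegral

theorem exp_mul_sub_exp_mul_le_integral {y y' g : ℝ → ℝ} {α a b : ℝ} (hab : a ≤ b)
    (hy' : IntervalIntegrable y' volume a b)
    (hy : ∀ x ∈ Icc a b, y x = y a + ∫ s in a..x, y' s)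
    (hg : IntervalIntegrable g volume a b)
    (hle : ∀ᵐ s ∂volume.restrict (Icc a b), y' s + α * y s ≤ g s) :
    exp (α * b) * y b - exp (α * a) * y a ≤ ∫ s in a..b, exp (α * s) * g s := by
  set w : ℝ → ℝ := fun x ↦ y a + ∫ s in a..x, y' s
  have hw : AbsolutelyContinuousOnInterval w a b :=
    (contDiffOn_const.absolutelyContinuousOnInterval).add
      (hy'.absolutelyContinuousOnInterval_intervalIntegral left_mem_uIcc)
  have hexp : AbsolutelyContinuousOnInterval (fun x ↦ exp (α * x)) a b :=
    ContDiffOn.absolutelyContinuousOnInterval (by fun_prop)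
  have hderiv : ∀ᵐ x, x ∈ uIoc a b →
      deriv (fun x ↦ exp (α * x)) x * w x + exp (α * x) * deriv w x
        = exp (α * x) * (y' x + α * w x) := by
    filter_upwards [hy'.ae_hasDerivAt_integral] with x hx hxab
    have hw' := ((hx (uIoc_subset_uIcc hxab) a left_mem_uIcc).const_add (y a)).deriv
    have he := (((hasDerivAt_id x).const_mul α).exp).deriv
    simp only [id, mul_one] at he
    rw [hw', he]
    ring
  have hyw : ∀ x ∈ Icc a b, y x = w x := hy
  have hint : IntervalIntegrable (fun x ↦ exp (α * x) * (y' x + α * w x)) volume a b :=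
    (hy'.add (hw.continuousOn.intervalIntegrable.const_mul α)).continuousOn_mul
      (by fun_prop)
  calc exp (α * b) * y b - exp (α * a) * y a = exp (α * b) * w b - exp (α * a) * w a := by
        rw [hyw b (right_mem_Icc.2 hab), hyw a (left_mem_Icc.2 hab)]
    _ = ∫ x in a..b, deriv (fun x ↦ exp (α * x)) x * w x + exp (α * x) * deriv w x :=
        (hexp.integral_deriv_mul_eq_sub hw).symm
    _ = ∫ x in a..b, exp (α * x) * (y' x + α * w x) := integral_congr_ae hderiv
    _ ≤ ∫ x in a..b, exp (α * x) * g x := by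
        refine integral_mono_ae_restrict hab hint (hg.continuousOn_mul (by fun_prop)) ?_
        filter_upwards [hle, ae_restrict_mem measurableSet_Icc] with x hx hxab
        rw [← hyw x hxab]
        exact mul_le_mul_of_nonneg_left hx (exp_pos _).le

theorem le_exp_mul_add_integral_of_ae_deriv_add_mul_le {y y' g : ℝ → ℝ} {α a b : ℝ}
    (hab : a ≤ b) (hy' : IntervalIntegrable y' volume a b)
    (hy : ∀ x ∈ Icc a b, y x = y a + ∫ s in a..x, y' s)
    (hg : IntervalIntegrable g volume a b)
    (hle : ∀ᵐ s ∂volume.restrict (Icc a b), y' s + α * y s ≤ g s) :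
    y b ≤ exp (-α * (b - a)) * y a + ∫ s in a..b, exp (-α * (b - s)) * g s := by
  have key := exp_mul_sub_exp_mul_le_integral hab hy' hy hg hle
  have hshift : ∀ c, exp (-α * b) * exp (α * c) = exp (-α * (b - c)) := fun c ↦ by
    rw [← exp_add]; ring_nf
  calc y b = exp (-α * b) * (exp (α * b) * y b) := by
        rw [← mul_assoc, hshift, sub_self, mul_zero, exp_zero, one_mul]
    _ ≤ exp (-α * b) * (exp (α * a) * y a + ∫ s in a..b, exp (α * s) * g s) := by
        gcongr; linarith
    _ = exp (-α * (b - a)) * y a + ∫ s in a..b, exp (-α * (b - s)) * g s := by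
        rw [mul_add, ← intervalIntegral.integral_const_mul]
        simp_rw [← mul_assoc, hshift]

section UnitIntervalBound

variable {h : ℝ → ℝ} {α r : ℝ}

theorem MeasureTheory.LocallyIntegrable.intervalIntegrable_exp_mul (hh : LocallyIntegrable h) (c t a b : ℝ) :
    IntervalIntegrable (fun s ↦ exp (c * (t - s)) * h s) volume a b :=
  ((hh.integrableOn_isCompact isCompact_uIcc).intervalIntegrable).continuousOn_mul (by fun_prop)

theorem integral_exp_neg_mul_le_of_le_add_one (hα : 0 ≤ α) (h0 : 0 ≤ h)
    (hh : LocallyIntegrable h) (hunit : ∀ s ≥ 0, ∫ τ in s..s + 1, h τ ≤ r)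
    {a t : ℝ} (ha : 0 ≤ a) (hat : a ≤ t) (hta : t ≤ a + 1) :
    ∫ s in a..t, exp (-α * (t - s)) * h s ≤ r :=
  calc ∫ s in a..t, exp (-α * (t - s)) * h s ≤ ∫ s in a..t, h s := by
        refine integral_mono_on hat (hh.intervalIntegrable_exp_mul _ _ _ _)
          (hh.integrableOn_isCompact isCompact_uIcc).intervalIntegrable fun s hs ↦ ?_
        exact mul_le_of_le_one_left (h0 s) (exp_le_one_iff.2 (by nlinarith [hs.2]))
    _ ≤ ∫ s in a..a + 1, h s :=
        integral_mono_interval le_rfl hat hta (ae_of_all _ h0)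
          (hh.integrableOn_isCompact isCompact_uIcc).intervalIntegrable
    _ ≤ r := hunit a ha

theorem integral_exp_neg_mul_le_div (hα : 0 < α) (h0 : 0 ≤ h)
    (hh : LocallyIntegrable h) (hunit : ∀ s ≥ 0, ∫ τ in s..s + 1, h τ ≤ r)
    {t : ℝ} (ht : 0 ≤ t) :
    ∫ s in 0..t, exp (-α * (t - s)) * h s ≤ r / (1 - exp (-α)) := by
  have hr : 0 ≤ r := (integral_nonneg (by simp) fun s _ ↦ h0 s).trans (hunit 0 le_rfl)
  have hq : 0 < 1 - exp (-α) := sub_pos.2 (exp_lt_one_iff.2 (by linarith))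
  set B := r / (1 - exp (-α))
  have hrB : r ≤ B := (le_div_iff₀ hq).2 (by nlinarith [exp_pos (-α)])
  -- Peeling off the last unit interval turns a bound `B` into `e^{-α} B + r`; this `B` is the
  -- fixed point.
  have hB : exp (-α) * B + r = B := by
    simp only [B]; field_simp; ring
  suffices ∀ n : ℕ, ∀ t ∈ Icc (0 : ℝ) n, ∫ s in 0..t, exp (-α * (t - s)) * h s ≤ B from
    this _ t ⟨ht, Nat.le_ceil t⟩
  intro n
  induction n with
  | zero =>
    rintro t ⟨ht0, htn⟩
    obtain rfl : t = 0 := le_antisymm (by exact_mod_cast htn) ht0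
    simpa using hr.trans hrB
  | succ n ih =>
    rintro t ⟨ht0, htn⟩
    rcases le_or_gt t 1 with ht1 | ht1
    · exact (integral_exp_neg_mul_le_of_le_add_one hα.le h0 hh hunit le_rfl ht0
        (by linarith)).trans hrB
    have hshift : ∫ s in 0..t - 1, exp (-α * (t - s)) * h s
        = exp (-α) * ∫ s in 0..t - 1, exp (-α * (t - 1 - s)) * h s := by
      rw [← intervalIntegral.integral_const_mul]
      congr 1 with s
      rw [← mul_assoc, ← exp_add]
      ring_nf
    calc ∫ s in 0..t, exp (-α * (t - s)) * h s
        = exp (-α) * (∫ s in 0..t - 1, exp (-α * (t - 1 - s)) * h s)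
          + ∫ s in t - 1..t, exp (-α * (t - s)) * h s := by
          rw [← integral_add_adjacent_intervals (hh.intervalIntegrable_exp_mul _ _ 0 (t - 1))
            (hh.intervalIntegrable_exp_mul _ _ _ _), hshift]
      _ ≤ exp (-α) * B + r := by
          gcongr
          · exact ih (t - 1) ⟨by linarith, by push_cast at htn; linarith⟩
          · exact integral_exp_neg_mul_le_of_le_add_one hα.le h0 hh hunit (by linarith)
              (by linarith) (by linarith)
      _ = B := hB

end UnitIntervalBound

theorem small_data_L2_bound_general (δ lam1 r t₁ : ℝ)
    (hδ : 0 < δ) (hlam1 : 0 < lam1) (hr : 0 < r)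
    (y y' g : ℝ → ℝ)
    (hy0 : y 0 ≤ Real.sqrt (2 / lam1) * r)
    (hy'int : IntegrableOn y' (Icc 0 t₁))
    (hFTC : ∀ t ∈ Icc 0 t₁, y t = y 0 + ∫ s in (0:ℝ)..t, y' s)
    (hg : IntegrableOn g (Icc 0 t₁))
    (hgbar : ∀ s ≥ (0:ℝ), ∫ τ in s..(s + 1), |Set.indicator (Icc 0 t₁) g τ| ≤ r)
    (hae : ∀ᵐ t ∂(volume.restrict (Icc 0 t₁)),
      y' t + (δ * lam1 / 2) * y t ≤ g t) :
    ∀ t ∈ Icc 0 t₁,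
      y t ≤ (Real.sqrt (2 / lam1) + 1 / (1 - Real.exp (-(δ * lam1 / 2)))) * r := by
  rintro t ⟨ht0, htt₁⟩
  set α := δ * lam1 / 2
  have hα : 0 < α := by positivity
  have hsub : Icc 0 t ⊆ Icc 0 t₁ := Icc_subset_Icc_right htt₁
  have hsub' : uIcc 0 t ⊆ Icc 0 t₁ := by rwa [uIcc_of_le ht0]
  set G : ℝ → ℝ := fun s ↦ |(Icc 0 t₁).indicator g s|
  have hG : Integrable G := (hg.integrable_indicator measurableSet_Icc).abs
  have hgG : ∀ s ∈ Icc 0 t, exp (-α * (t - s)) * g s ≤ exp (-α * (t - s)) * G s := by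
    intro s hs
    gcongr
    exact (indicator_of_mem (hsub hs) g).symm ▸ le_abs_self _
  have hdecay : exp (-α * (t - 0)) * y 0 ≤ √(2 / lam1) * r :=
    (mul_le_mul_of_nonneg_left hy0 (exp_pos _).le).trans
      (mul_le_of_le_one_left (by positivity) (exp_le_one_iff.2 (by nlinarith)))
  calc y t ≤ exp (-α * (t - 0)) * y 0 + ∫ s in 0..t, exp (-α * (t - s)) * g s :=
        le_exp_mul_add_integral_of_ae_deriv_add_mul_le ht0
          ((hy'int.mono_set hsub').intervalIntegrable) (fun x hx ↦ hFTC x (hsub hx))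
          ((hg.mono_set hsub').intervalIntegrable) (ae_restrict_of_ae_restrict_of_subset hsub hae)
    _ ≤ √(2 / lam1) * r + r / (1 - exp (-α)) := by
        refine add_le_add hdecay ((integral_mono_on ht0 ?_ ?_ hgG).trans
          (integral_exp_neg_mul_le_div hα (fun s ↦ abs_nonneg _) hG.locallyIntegrable hgbar ht0))
        · exact ((hg.mono_set hsub').intervalIntegrable).continuousOn_mul (by fun_prop)
        · exact hG.locallyIntegrable.intervalIntegrable_exp_mul _ _ _ _
    _ = (√(2 / lam1) + 1 / (1 - exp (-α))) * r := by ring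

/-- Quantitative uniform Gronwall bound: if `y(0) ≤ √(2/λ₁) r` and
`y' + (δλ₁/2)y ≤ g` a.e. with unit-interval integrals of `|g̃|` bounded by `r`,
then `y(t) ≤ N₁ r` on `[0,t₁]`, where `N₁ = √(2/λ₁) + 1/(1 - e^{-δλ₁/2})`. -/
theorem small_data_L2_bound (δ lam1 r t₁ : ℝ)
    (hδ : 0 < δ) (hδ1 : δ ≤ 1) (hlam1 : 0 < lam1) (hr : 0 < r) (ht₁ : 0 < t₁)
    (y y' g : ℝ → ℝ)
    (hynn : ∀ t ∈ Icc 0 t₁, 0 ≤ y t)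
    (hy0 : y 0 ≤ Real.sqrt (2 / lam1) * r)
    (hy'int : IntegrableOn y' (Icc 0 t₁))
    (hFTC : ∀ t ∈ Icc 0 t₁, y t = y 0 + ∫ s in (0:ℝ)..t, y' s)
    (hg : IntegrableOn g (Icc 0 t₁))
    (hgbar : ∀ s ≥ (0:ℝ), ∫ τ in s..(s + 1), |Set.indicator (Icc 0 t₁) g τ| ≤ r)
    (hae : ∀ᵐ t ∂(volume.restrict (Icc 0 t₁)),
      y' t + (δ * lam1 / 2) * y t ≤ g t) :
    ∀ t ∈ Icc 0 t₁,
      y t ≤ (Real.sqrt (2 / lam1) + 1 / (1 - Real.exp (-(δ * lam1 / 2)))) * r :=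
  small_data_L2_bound_general δ lam1 r t₁ hδ hlam1 hr y y' g hy0 hy'int hFTC hg hgbar hae
end
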